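/- Let C be an abelian category and 𝒲 a class of objects of C. Let 0→A→x B→y C→0 be a Hom(−,𝒲)-exact short exact sequence, and let 0→A→W⁰ᴬ→Kᴬ→0 and 0→C→W⁰ᶜ→Kᶜ→0 be short exact sequences with W⁰ᴬ ∈ 𝒲. Then there exist an object Kᴮ and morphisms forming a commutative 3×3 diagram in which: the three columns are short exact sequences 0→A→W⁰ᴬ→Kᴬ→0 (the given one), 0→B→W⁰ᴬ⊕W⁰ᶜ→Kᴮ→0, and 0→C→W⁰ᶜ→Kᶜ→0 (the given one); the top row is the given sequence 0→A→B→C→0; the middle row is the split short exact sequence 0→W⁰ᴬ→W⁰ᴬ⊕W⁰ᶜ→W⁰ᶜ→0 given by the canonical injection and projection; and the bottom row 0→Kᴬ→Kᴮ→Kᶜ→0 is a short exact sequence. Moreover: (1) if the first and third columns are Hom(−,𝒲)-exact, then all rows and columns of this diagram are Hom(−,𝒲)-exact; (2) if the top row and the first and third columns are Hom(𝒲,−)-exact, then all rows and columns of this diagram are Hom(𝒲,−)-exact. -/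

import Mathlib

open CategoryTheory Category Limits

universe v u

variable {C : Type u} [Category.{v} C] [Abelian C]

def SES {A B X : C} (f : A ⟶ B) (g : B ⟶ X) : Prop :=
  ∃ w : f ≫ g = 0, (CategoryTheory.ShortComplex.mk f g w).ShortExact

def CovExact (𝒲 : Set C) {A B X : C} (f : A ⟶ B) (g : B ⟶ X) : Prop :=
  ∀ W ∈ 𝒲,
    (Function.Injective fun u : W ⟶ A => u ≫ f) ∧
    (∀ v : W ⟶ B, v ≫ g = 0 → ∃ u : W ⟶ A, u ≫ f = v) ∧
    (Function.Surjective fun v : W ⟶ B => v ≫ g)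

def ContraExact (𝒲 : Set C) {A B X : C} (f : A ⟶ B) (g : B ⟶ X) : Prop :=
  ∀ W ∈ 𝒲,
    (Function.Injective fun u : X ⟶ W => g ≫ u) ∧
    (∀ v : B ⟶ W, f ≫ v = 0 → ∃ u : X ⟶ W, g ≫ u = v) ∧
    (Function.Surjective fun v : B ⟶ W => f ≫ v)


/-! The middle column is `B → W⁰ᴬ ⊞ W⁰ᶜ`, `b ↦ (t b, gC (y b))`, where `t : B → W⁰ᴬ` extends
`gA` along `x`; such a `t` exists because `W⁰ᴬ ∈ 𝒲` and the top row is `Hom(-,𝒲)`-exact. This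
map is mono, `Kᴮ` is its cokernel, and the bottom row is short exact by the snake lemma applied to
the morphism from the top row to the split middle row, all of whose components are mono.

For a short exact sequence, `Hom(-,W)`- or `Hom(W,-)`-exactness only asks for surjectivity at the
end of the Hom sequence; for the new row and column the required maps are assembled componentwise
through the biproduct from those given by the outer columns. -/
namespace SES

variable {A B X : C} {f : A ⟶ B} {g : B ⟶ X}

lemma mono (h : SES f g) : Mono f := h.snd.mono_f

lemma epi (h : SES f g) : Epi g := h.snd.epi_g

lemma exists_lift (h : SES f g) {W : C} (v : W ⟶ B) (hv : v ≫ g = 0) :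
    ∃ u : W ⟶ A, u ≫ f = v :=
  ⟨_, KernelFork.IsLimit.lift' h.snd.fIsKernel v hv |>.2⟩

lemma exists_desc (h : SES f g) {W : C} (v : B ⟶ W) (hv : f ≫ v = 0) :
    ∃ u : X ⟶ W, g ≫ u = v :=
  ⟨_, CokernelCofork.IsColimit.desc' h.snd.gIsCokernel v hv |>.2⟩

lemma of_mono_cokernel (f : A ⟶ B) [Mono f] : SES f (cokernel.π f) :=
  ⟨cokernel.condition f,
    { exact := ShortComplex.exact_of_g_is_cokernel _ (cokernelIsCokernel f) }⟩

lemma biprod (X Y : C) : SES (biprod.inl : X ⟶ X ⊞ Y) biprod.snd :=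
  ⟨biprod.inl_snd, (ShortComplex.Splitting.ofHasBinaryBiproduct X Y).shortExact⟩

end SES

lemma ContraExact.of_SES {𝒲 : Set C} {A B X : C} {f : A ⟶ B} {g : B ⟶ X} (h : SES f g)
    (surj : ∀ W ∈ 𝒲, Function.Surjective fun v : B ⟶ W => f ≫ v) :
    ContraExact 𝒲 f g := fun W hW =>
  have := h.epi
  ⟨fun _ _ => (cancel_epi g).mp, fun v hv => h.exists_desc v hv, surj W hW⟩

lemma CovExact.of_SES {𝒲 : Set C} {A B X : C} {f : A ⟶ B} {g : B ⟶ X} (h : SES f g)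
    (surj : ∀ W ∈ 𝒲, Function.Surjective fun v : W ⟶ B => v ≫ g) :
    CovExact 𝒲 f g := fun W hW =>
  have := h.mono
  ⟨fun _ _ => (cancel_mono f).mp, fun v hv => h.exists_lift v hv, surj W hW⟩

lemma contraExact_biprod (𝒲 : Set C) (X Y : C) :
    ContraExact 𝒲 (biprod.inl : X ⟶ X ⊞ Y) biprod.snd :=
  .of_SES (SES.biprod X Y) fun _ _ u => ⟨biprod.fst ≫ u, by simp⟩

lemma covExact_biprod (𝒲 : Set C) (X Y : C) :
    CovExact 𝒲 (biprod.inl : X ⟶ X ⊞ Y) biprod.snd :=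
  .of_SES (SES.biprod X Y) fun _ _ u => ⟨u ≫ biprod.inr, by simp⟩

section Diagram

variable {A B X W₁ W₂ W₃ KA KB KC : C}
  {x : A ⟶ B} {y : B ⟶ X} {x₁ : KA ⟶ KB} {y₁ : KB ⟶ KC}
  {gA : A ⟶ W₁} {fA : W₁ ⟶ KA} {gC : X ⟶ W₃} {fC : W₃ ⟶ KC}

open ZeroObject in
lemma SES.nine_lemma {i : W₁ ⟶ W₂} {p : W₂ ⟶ W₃} {gB : B ⟶ W₂} {fB : W₂ ⟶ KB}
    (hrow : SES x y) (hmid : SES i p)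
    (hA : SES gA fA) (hB : SES gB fB) (hC : SES gC fC)
    (sq₁ : x ≫ gB = gA ≫ i) (sq₂ : gB ≫ p = y ≫ gC)
    (sq₃ : i ≫ fB = fA ≫ x₁) (sq₄ : fB ≫ y₁ = p ≫ fC) :
    SES x₁ y₁ := by
  have := hA.mono; have := hB.mono; have := hC.mono
  have := hA.epi; have := hC.epi; have := hmid.epi
  have w : x₁ ≫ y₁ = 0 := by
    rw [← cancel_epi fA, reassoc_of% sq₃.symm, sq₄, reassoc_of% hmid.fst, zero_comp, comp_zero]
  let S : ShortComplex.SnakeInput C :=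
    { L₀ := ShortComplex.mk (0 : (0 : C) ⟶ 0) 0 (by simp)
      L₁ := ShortComplex.mk x y hrow.fst
      L₂ := ShortComplex.mk i p hmid.fst
      L₃ := ShortComplex.mk x₁ y₁ w
      v₀₁ := 0
      v₁₂ := { τ₁ := gA, τ₂ := gB, τ₃ := gC, comm₁₂ := sq₁.symm, comm₂₃ := sq₂ }
      v₂₃ := { τ₁ := fA, τ₂ := fB, τ₃ := fC, comm₁₂ := sq₃.symm, comm₂₃ := sq₄ }
      w₀₂ := zero_comp
      w₁₃ := by ext <;> [exact hA.fst; exact hB.fst; exact hC.fst]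
      h₀ := by
        apply ShortComplex.isLimitOfIsLimitπ <;> exact (KernelFork.isLimitMapConeEquiv _ _).2
          (KernelFork.IsLimit.ofMonoOfIsZero (KernelFork.ofι 0 zero_comp) (by assumption)
            (isZero_zero C))
      h₃ := by
        apply ShortComplex.isColimitOfIsColimitπ <;>
          apply (CokernelCofork.isColimitMapCoconeEquiv _ _).2
        · exact hA.snd.gIsCokernel
        · exact hB.snd.gIsCokernel
        · exact hC.snd.gIsCokernel
      L₁_exact := hrow.snd.exact
      epi_L₁_g := hrow.epi
      L₂_exact := hmid.snd.exact
      mono_L₂_f := hmid.mono }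
  -- `S.L₂'` is `0 ⟶ KA ⟶ KB`, its first map being the connecting morphism of the snake lemma.
  have hδ : S.L₂'.f = 0 := (isZero_zero C).eq_of_src _ _
  have : Mono x₁ := S.L₂'_exact.mono_g hδ
  have : Epi (fB ≫ y₁) := by rw [sq₄]; exact epi_comp _ _
  have : Epi y₁ := epi_of_epi fB y₁
  exact ⟨w, { exact := S.L₃_exact }⟩

variable {gB : B ⟶ W₁ ⊞ W₃} {fB : W₁ ⊞ W₃ ⟶ KB} {𝒲 : Set C}

lemma contraExact_bottom_row (hrow : SES x y) (hA : SES gA fA) (hB : SES gB fB)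
    (hbot : SES x₁ y₁) (hC : ContraExact 𝒲 gC fC)
    (sq₁ : x ≫ gB = gA ≫ biprod.inl) (sq₂ : gB ≫ biprod.snd = y ≫ gC)
    (sq₃ : biprod.inl ≫ fB = fA ≫ x₁) :
    ContraExact 𝒲 x₁ y₁ := by
  refine .of_SES hbot fun W hW u => ?_
  have := hA.epi
  have ht : x ≫ gB ≫ biprod.fst = gA := by simp [reassoc_of% sq₁]
  obtain ⟨u', hu'⟩ := hrow.exists_desc (gB ≫ biprod.fst ≫ fA ≫ u)
    (by rw [reassoc_of% ht, reassoc_of% hA.fst, zero_comp])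
  obtain ⟨r, hr : gC ≫ r = u'⟩ := (hC W hW).2.2 u'
  obtain ⟨v, hv⟩ := hB.exists_desc (biprod.fst ≫ fA ≫ u - biprod.snd ≫ r) (by
    rw [Preadditive.comp_sub, reassoc_of% sq₂, hr, hu', sub_self])
  refine ⟨v, (cancel_epi fA).mp ?_⟩
  simp only [← reassoc_of% sq₃, hv, Preadditive.comp_sub, biprod.inl_fst_assoc,
    biprod.inl_snd_assoc, zero_comp, sub_zero]

lemma contraExact_middle_column (hrow : SES x y) (hB : SES gB fB)
    (hA : ContraExact 𝒲 gA fA) (hC : ContraExact 𝒲 gC fC)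
    (sq₁ : x ≫ gB = gA ≫ biprod.inl) (sq₂ : gB ≫ biprod.snd = y ≫ gC) :
    ContraExact 𝒲 gB fB := by
  refine .of_SES hB fun W hW u => ?_
  have ht : x ≫ gB ≫ biprod.fst = gA := by simp [reassoc_of% sq₁]
  obtain ⟨p, hp : gA ≫ p = x ≫ u⟩ := (hA W hW).2.2 (x ≫ u)
  obtain ⟨q, hq⟩ := hrow.exists_desc (u - gB ≫ biprod.fst ≫ p)
    (by rw [Preadditive.comp_sub, reassoc_of% ht, hp, sub_self])
  obtain ⟨r, hr : gC ≫ r = q⟩ := (hC W hW).2.2 q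
  refine ⟨biprod.fst ≫ p + biprod.snd ≫ r, ?_⟩
  simp only [Preadditive.comp_add, reassoc_of% sq₂, hr, hq]
  abel

lemma covExact_bottom_row (hbot : SES x₁ y₁) (hC : CovExact 𝒲 gC fC)
    (sq₄ : fB ≫ y₁ = biprod.snd ≫ fC) :
    CovExact 𝒲 x₁ y₁ := by
  refine .of_SES hbot fun W hW u => ?_
  obtain ⟨s, hs⟩ := (hC W hW).2.2 u
  exact ⟨s ≫ biprod.inr ≫ fB, by simpa [sq₄] using hs⟩

lemma covExact_middle_column (hB : SES gB fB) (hbot : SES x₁ y₁)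
    (hA : CovExact 𝒲 gA fA) (hC : CovExact 𝒲 gC fC)
    (sq₃ : biprod.inl ≫ fB = fA ≫ x₁) (sq₄ : fB ≫ y₁ = biprod.snd ≫ fC) :
    CovExact 𝒲 gB fB := by
  refine .of_SES hB fun W hW u => ?_
  obtain ⟨s, hs : s ≫ fC = u ≫ y₁⟩ := (hC W hW).2.2 (u ≫ y₁)
  obtain ⟨k, hk⟩ := hbot.exists_lift (u - s ≫ biprod.inr ≫ fB)
    (by simp [Preadditive.sub_comp, sq₄, hs])
  obtain ⟨a, ha : a ≫ fA = k⟩ := (hA W hW).2.2 k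
  refine ⟨a ≫ biprod.inl + s ≫ biprod.inr, ?_⟩
  simp only [Preadditive.add_comp, assoc, sq₃, reassoc_of% ha, hk]
  abel

end Diagram

lemma mono_biprod_lift {A B X W₁ W₃ : C} {x : A ⟶ B} {y : B ⟶ X} {gA : A ⟶ W₁} {gC : X ⟶ W₃}
    [Mono gA] [Mono gC] (hrow : SES x y) {t : B ⟶ W₁} (ht : x ≫ t = gA) :
    Mono (biprod.lift t (y ≫ gC)) := by
  refine Preadditive.mono_of_cancel_zero _ fun b hb => ?_
  have hy : b ≫ y = 0 := by
    simpa [← cancel_mono gC] using congrArg (· ≫ biprod.snd) hb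
  obtain ⟨a, rfl⟩ := hrow.exists_lift b hy
  have ha : a = 0 := by
    rw [← cancel_mono gA]
    simpa [ht] using congrArg (· ≫ biprod.fst) hb
  rw [ha, zero_comp]

/-- Dual horseshoe-type 3×3 diagram built from a `Hom(-,𝒲)`-exact sequence
`0→A→B→C→0` and short exact sequences `0→A→W⁰ᴬ→Kᴬ→0`, `0→C→W⁰ᶜ→Kᶜ→0` with
`W⁰ᴬ ∈ 𝒲`, together with the two "moreover" exactness transfers. -/
theorem stmt_7 (𝒲 : Set C) {A B X KA W0A KC W0C : C}
    (x : A ⟶ B) (y : B ⟶ X)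
    (gA : A ⟶ W0A) (fA : W0A ⟶ KA)
    (gC : X ⟶ W0C) (fC : W0C ⟶ KC)
    (hrow : SES x y) (hcon : ContraExact 𝒲 x y)
    (hA : SES gA fA) (hC : SES gC fC)
    (hWA : W0A ∈ 𝒲) :
    ∃ (KB : C) (gB : B ⟶ W0A ⊞ W0C) (fB : W0A ⊞ W0C ⟶ KB)
      (x1 : KA ⟶ KB) (y1 : KB ⟶ KC),
      -- commutativity of the four squares
      x ≫ gB = gA ≫ biprod.inl ∧
      gB ≫ biprod.snd = y ≫ gC ∧
      biprod.inl ≫ fB = fA ≫ x1 ∧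
      fB ≫ y1 = biprod.snd ≫ fC ∧
      -- the middle (split) row, the bottom row and the middle column are short exact
      SES (biprod.inl : W0A ⟶ W0A ⊞ W0C) (biprod.snd : W0A ⊞ W0C ⟶ W0C) ∧
      SES x1 y1 ∧
      SES gB fB ∧
      -- (1) if the first and third columns are Hom(-,𝒲)-exact, then so are all rows and columns
      (ContraExact 𝒲 gA fA → ContraExact 𝒲 gC fC →
        (ContraExact 𝒲 x y ∧
         ContraExact 𝒲 (biprod.inl : W0A ⟶ W0A ⊞ W0C) (biprod.snd : W0A ⊞ W0C ⟶ W0C) ∧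
         ContraExact 𝒲 x1 y1 ∧
         ContraExact 𝒲 gA fA ∧ ContraExact 𝒲 gB fB ∧ ContraExact 𝒲 gC fC)) ∧
      -- (2) if the top row and the first and third columns are Hom(𝒲,-)-exact,
      -- then so are all rows and columns
      (CovExact 𝒲 x y → CovExact 𝒲 gA fA → CovExact 𝒲 gC fC →
        (CovExact 𝒲 x y ∧
         CovExact 𝒲 (biprod.inl : W0A ⟶ W0A ⊞ W0C) (biprod.snd : W0A ⊞ W0C ⟶ W0C) ∧
         CovExact 𝒲 x1 y1 ∧
         CovExact 𝒲 gA fA ∧ CovExact 𝒲 gB fB ∧ CovExact 𝒲 gC fC)) := by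
  have := hA.mono; have := hC.mono
  obtain ⟨t, ht⟩ := (hcon W0A hWA).2.2 gA
  have := mono_biprod_lift (gC := gC) hrow ht
  set gB := biprod.lift t (y ≫ gC)
  have sq₁ : x ≫ gB = gA ≫ biprod.inl := by ext <;> simp [gB, ht, reassoc_of% hrow.fst]
  have sq₂ : gB ≫ biprod.snd = y ≫ gC := biprod.lift_snd _ _
  have hB := SES.of_mono_cokernel gB
  obtain ⟨x₁, hx₁⟩ := hA.exists_desc (biprod.inl ≫ cokernel.π gB)
    (by rw [← reassoc_of% sq₁, hB.fst, comp_zero])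
  have sq₃ : biprod.inl ≫ cokernel.π gB = fA ≫ x₁ := hx₁.symm
  let y₁ := cokernel.desc gB (biprod.snd ≫ fC) (by rw [reassoc_of% sq₂, hC.fst, comp_zero])
  have sq₄ : cokernel.π gB ≫ y₁ = biprod.snd ≫ fC := cokernel.π_desc _ _ _
  have hbot := SES.nine_lemma hrow (SES.biprod _ _) hA hB hC sq₁ sq₂ sq₃ sq₄
  refine ⟨_, gB, cokernel.π gB, x₁, y₁, sq₁, sq₂, sq₃, sq₄, SES.biprod _ _, hbot, hB,
    fun hA' hC' => ⟨hcon, contraExact_biprod _ _ _,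
      contraExact_bottom_row hrow hA hB hbot hC' sq₁ sq₂ sq₃, hA',
      contraExact_middle_column hrow hB hA' hC' sq₁ sq₂, hC'⟩,
    fun hrow' hA' hC' => ⟨hrow', covExact_biprod _ _ _, covExact_bottom_row hbot hC' sq₄, hA',
      covExact_middle_column hB hbot hA' hC' sq₃ sq₄, hC'⟩⟩
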